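/- arXiv:2507.00531 — 5 statements merged into one kernel-verified Lean document; each statement's English description precedes it below -/
import Mathlib

section
/- Let A, B be real n×n matrices with σ_min(A) > ‖B‖ (spectral norm). Then for every c ∈ ℝⁿ, the generalized absolute value equation Ax − B|x| = c (where |x| is the componentwise absolute value) has a solution, and this solution is unique. -/
open Matrix

noncomputable def specNorm {n : ℕ} (A : Matrix (Fin n) (Fin n) ℝ) : ℝ :=
  ‖(Matrix.toEuclideanCLM (𝕜 := ℝ) A : EuclideanSpace ℝ (Fin n) →L[ℝ] EuclideanSpace ℝ (Fin n))‖

noncomputable def sigmaMin {n : ℕ} (A : Matrix (Fin n) (Fin n) ℝ) : ℝ :=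
  sInf {r : ℝ | ∃ x : EuclideanSpace ℝ (Fin n), ‖x‖ = 1 ∧ r = ‖(A.mulVec x : Fin n → ℝ)‖}

noncomputable def vabs {n : ℕ} (x : EuclideanSpace ℝ (Fin n)) : EuclideanSpace ℝ (Fin n) := WithLp.toLp 2 (fun i => |x i|)


/-!
If `σ_min(A) > 0`, then `A` is invertible with `A⁻¹` being `σ_min(A)⁻¹`-Lipschitz, and since
`x ↦ |x|` is `1`-Lipschitz, `x ↦ A⁻¹ (c + B |x|)` is a contraction with constant
`‖B‖ / σ_min(A) < 1`. Its fixed points are exactly the solutions of `A x - B |x| = c`, so the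
Banach fixed point theorem gives existence and uniqueness.
-/

open Function NNReal

theorem AntilipschitzWith.existsUnique_sub_eq {E : Type*} [NormedAddCommGroup E] [CompleteSpace E]
    {f g : E → E} {Kf Kg : ℝ≥0} (hf : AntilipschitzWith Kf f) (hsurj : Surjective f)
    (hg : LipschitzWith Kg g) (hK : Kg < Kf⁻¹) (c : E) : ∃! x, f x - g x = c := by
  set T : E → E := fun x => surjInv hsurj (c + g x)
  have hfixed : ∀ x, IsFixedPt T x ↔ f x - g x = c := fun x => by
    rw [sub_eq_iff_eq_add, IsFixedPt, ← hf.injective.eq_iff, surjInv_eq hsurj, eq_comm]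
  have hcg : LipschitzWith Kg fun x => c + g x := by simpa using (LipschitzWith.const c).add hg
  have hKf : Kf ≠ 0 := by rintro rfl; simp at hK
  have hT : ContractingWith (Kf * Kg) T :=
    ⟨by rw [mul_comm]; exact (NNReal.lt_inv_iff_mul_lt hKf).mp hK,
      (hf.to_rightInverse (rightInverse_surjInv hsurj)).comp hcg⟩
  exact ⟨_, (hfixed _).mp hT.fixedPoint_isFixedPt,
    fun y hy => hT.fixedPoint_unique ((hfixed y).mpr hy)⟩

section

variable {n : ℕ}

theorem lipschitzWith_one_vabs : LipschitzWith 1 (vabs : EuclideanSpace ℝ (Fin n) → _) :=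
  LipschitzWith.mk_one fun x y => by
    simp_rw [EuclideanSpace.dist_eq]
    gcongr with i
    simpa [vabs, Real.dist_eq] using abs_abs_sub_abs_le_abs_sub (x i) (y i)

theorem sigmaMin_mul_norm_le (A : Matrix (Fin n) (Fin n) ℝ) (x : EuclideanSpace ℝ (Fin n)) :
    sigmaMin A * ‖x‖ ≤ ‖toEuclideanCLM (𝕜 := ℝ) A x‖ := by
  rcases eq_or_ne x 0 with rfl | hx
  · simp
  have hunit : sigmaMin A ≤ ‖A *ᵥ (‖x‖⁻¹ • x).ofLp‖ :=
    csInf_le ⟨0, fun r ⟨_, _, hr⟩ => hr ▸ norm_nonneg _⟩ ⟨_, norm_smul_inv_norm hx, rfl⟩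
  -- `sigmaMin` measures `A x` in the sup norm of `Fin n → ℝ`, which the Euclidean norm dominates.
  have hsup : ‖A *ᵥ x.ofLp‖ ≤ ‖toEuclideanCLM (𝕜 := ℝ) A x‖ :=
    (pi_norm_le_iff_of_nonneg (norm_nonneg _)).mpr fun i => by
      simpa using PiLp.norm_apply_le (toEuclideanCLM (𝕜 := ℝ) A x) i
  rw [WithLp.ofLp_smul, mulVec_smul, norm_smul, norm_inv, norm_norm] at hunit
  rw [mul_comm, ← le_inv_mul_iff₀ (norm_pos_iff.mpr hx)]
  exact hunit.trans (by gcongr)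

theorem antilipschitzWith_toEuclideanCLM {A : Matrix (Fin n) (Fin n) ℝ} (hA : 0 < sigmaMin A) :
    AntilipschitzWith (sigmaMin A).toNNReal⁻¹ (toEuclideanCLM (𝕜 := ℝ) A) :=
  ContinuousLinearMap.antilipschitz_of_bound _ fun x => by
    rw [NNReal.coe_inv, Real.coe_toNNReal _ hA.le, le_inv_mul_iff₀ hA]
    exact sigmaMin_mul_norm_le A x

end

theorem gave_exists_unique {n : ℕ} (A B : Matrix (Fin n) (Fin n) ℝ)
    (h : specNorm B < sigmaMin A) (c : EuclideanSpace ℝ (Fin n)) :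
    ∃! x : EuclideanSpace ℝ (Fin n), A.mulVec x - B.mulVec (vabs x) = c := by
  have hA := antilipschitzWith_toEuclideanCLM ((norm_nonneg _).trans_lt h)
  have hsurj : Surjective (toEuclideanCLM (𝕜 := ℝ) A) :=
    LinearMap.injective_iff_surjective.mp hA.injective
  have hB := (toEuclideanCLM (𝕜 := ℝ) B).lipschitz.comp lipschitzWith_one_vabs
  have hK : ‖toEuclideanCLM (𝕜 := ℝ) B‖₊ * 1 < ((sigmaMin A).toNNReal⁻¹)⁻¹ := by
    rwa [inv_inv, mul_one, Real.lt_toNNReal_iff_coe_lt]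
  refine (existsUnique_congr fun x => ?_).mp (hA.existsUnique_sub_eq hsurj hB hK c)
  rw [← (WithLp.ofLp_injective 2).eq_iff]
  simp [ofLp_toEuclideanCLM]
end

section
/- Conversely, if vectors z, w ∈ ℝⁿ satisfy Cz − Dw = p, z ≥ 0, w ≥ 0, wᵀz = 0 for real n×n matrices C, D and p ∈ ℝⁿ, then x = z − w solves Ax − B|x| = c with A = (C+D)/2, B = (D−C)/2, c = p. -/
/-!
Complementarity `z ≥ 0`, `w ≥ 0`, `wᵀz = 0` forces `z i * w i = 0` for every `i`, so `|z - w| = z + w`.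
Substituting `x = z - w` and `|x| = z + w`, the `(C + D) / 2` and `(D - C) / 2` terms recombine to
`C z - D w = p`.
-/

open Matrix

theorem mul_eq_zero_of_dotProduct_eq_zero {ι R : Type*} [Fintype ι] [Semiring R] [PartialOrder R]
    [IsOrderedRing R] {v w : ι → R} (hv : 0 ≤ v) (hw : 0 ≤ w) (h : v ⬝ᵥ w = 0) (i : ι) :
    v i * w i = 0 :=
  (Finset.sum_eq_zero_iff_of_nonneg fun j _ => mul_nonneg (hv j) (hw j)).mp h i (Finset.mem_univ i)

theorem abs_sub_eq_add_of_mul_eq_zero {R : Type*} [Ring R] [LinearOrder R] [IsStrictOrderedRing R]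
    {a b : R} (ha : 0 ≤ a) (hb : 0 ≤ b) (h : b * a = 0) : |a - b| = a + b := by
  rcases mul_eq_zero.mp h with rfl | rfl
  · simp [ha]
  · simp [abs_of_nonneg hb]

-- `/` on square matrices multiplies by the nonsingular inverse `Matrix.inv`, junk on singular matrices.
theorem Matrix.div_ofNat {ι K : Type*} [Fintype ι] [DecidableEq ι] [Field K]
    (M : Matrix ι ι K) (m : ℕ) [m.AtLeastTwo] [NeZero (OfNat.ofNat m : K)] :
    M / OfNat.ofNat m = (OfNat.ofNat m : K)⁻¹ • M := by
  have hinv : (OfNat.ofNat m : Matrix ι ι K)⁻¹ = (OfNat.ofNat m : K)⁻¹ • 1 :=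
    inv_eq_right_inv <| by
      rw [← diagonal_ofNat, smul_one_eq_diagonal, diagonal_mul_diagonal]
      simp [NeZero.ne]
  rw [div_eq_mul_inv, hinv, mul_smul_comm, mul_one]

theorem Matrix.half_add_mulVec_sub_half_sub_mulVec_add {ι K : Type*} [Fintype ι] [DecidableEq ι]
    [Field K] [NeZero (2 : K)] (C D : Matrix ι ι K) (z w : ι → K) :
    ((C + D) / 2) *ᵥ (z - w) - ((D - C) / 2) *ᵥ (z + w) = C *ᵥ z - D *ᵥ w := by
  rw [div_ofNat _ 2, div_ofNat _ 2]
  simp only [smul_mulVec, add_mulVec, sub_mulVec, mulVec_add, mulVec_sub]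
  match_scalars <;> field_simp <;> ring

theorem hlcp_to_gave {n : ℕ} (C D : Matrix (Fin n) (Fin n) ℝ) (p z w : Fin n → ℝ)
    (heq : C.mulVec z - D.mulVec w = p) (hz : 0 ≤ z) (hw : 0 ≤ w) (hzw : w ⬝ᵥ z = 0) :
    ((C + D) / 2).mulVec (z - w) - ((D - C) / 2).mulVec (fun i => |(z - w) i|) = p := by
  have habs : (fun i => |(z - w) i|) = z + w := funext fun i =>
    abs_sub_eq_add_of_mul_eq_zero (hz i) (hw i) (mul_eq_zero_of_dotProduct_eq_zero hw hz hzw i)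
  rw [habs, half_add_mulVec_sub_half_sub_mulVec_add, heq]
end

section
/- Let M be a real n×n matrix and q ∈ ℝⁿ. If x ∈ ℝⁿ solves the GAVE (M+I)x − (M−I)|x| = q, then z = |x| − x and w = |x| + x satisfy the LCP: w = Mz + q, z ≥ 0, w ≥ 0, and wᵀz = 0. -/
/-!
The GAVE is linear in `x` and `|x|`, and `(M + 1) x - (M - 1) a = (a + x) - M (a - x)` holds for
every vector `a`; with `a = |x|` it reads `w - M z = q`. Complementarity is `(|t| + t)(|t| - t) =
|t|² - t² = 0` in each coordinate.
-/

open Matrix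

theorem add_one_mulVec_sub_sub_one_mulVec {ι R : Type*} [Fintype ι] [DecidableEq ι] [CommRing R]
    (M : Matrix ι ι R) (x a : ι → R) :
    (M + 1) *ᵥ x - (M - 1) *ᵥ a = (a + x) - M *ᵥ (a - x) := by
  simp only [add_mulVec, sub_mulVec, one_mulVec, mulVec_sub]
  abel

theorem abs_add_self_mul_abs_sub_self {R : Type*} [CommRing R] [LinearOrder R] [IsOrderedRing R]
    (t : R) : (|t| + t) * (|t| - t) = 0 := by
  rw [← sq_sub_sq, sq_abs, sub_self]

theorem abs_add_self_dotProduct_abs_sub_self {ι R : Type*} [Fintype ι] [CommRing R] [LinearOrder R]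
    [IsOrderedRing R] (x : ι → R) :
    (fun i => |x i| + x i) ⬝ᵥ (fun i => |x i| - x i) = 0 :=
  Finset.sum_eq_zero fun i _ => abs_add_self_mul_abs_sub_self (x i)

theorem gave_to_lcp {n : ℕ} (M : Matrix (Fin n) (Fin n) ℝ) (q x : Fin n → ℝ)
    (hx : (M + 1).mulVec x - (M - 1).mulVec (fun i => |x i|) = q) :
    (fun i => |x i| + x i) = M.mulVec (fun i => |x i| - x i) + q ∧
      (0 : Fin n → ℝ) ≤ (fun i => |x i| - x i) ∧
      (0 : Fin n → ℝ) ≤ (fun i => |x i| + x i) ∧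
      (fun i => |x i| + x i) ⬝ᵥ (fun i => |x i| - x i) = 0 := by
  refine ⟨?_, fun i => sub_nonneg.mpr (le_abs_self (x i)),
    fun i => (add_abs_nonneg (x i)).trans_eq (add_comm _ _),
    abs_add_self_dotProduct_abs_sub_self x⟩
  rw [← hx, add_one_mulVec_sub_sub_one_mulVec]
  exact (add_sub_cancel _ _).symm
end

section
/- Let A be a real n×n matrix and c ∈ ℝⁿ. A vector x ∈ ℝⁿ solves Ax − |x| = c if and only if Ax + x − c ≥ 0, Ax − x − c ≥ 0, and (Ax + x − c)ᵀ(Ax − x − c) = 0. -/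
open Matrix

theorem eq_abs_iff_nonneg_add_nonneg_sub_mul_eq_zero {α : Type*} [CommRing α] [LinearOrder α]
    [IsStrictOrderedRing α] {a b : α} :
    a = |b| ↔ 0 ≤ a + b ∧ 0 ≤ a - b ∧ (a + b) * (a - b) = 0 := by
  constructor
  · rintro rfl
    refine ⟨by linarith [neg_abs_le b], by linarith [le_abs_self b], ?_⟩
    linear_combination sq_abs b
  · rintro ⟨hadd, hsub, hmul⟩
    rcases mul_eq_zero.mp hmul with h | h
    · rw [abs_of_nonpos (by linarith)]
      linarith
    · rw [abs_of_nonneg (by linarith)]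
      linarith

theorem dotProduct_eq_zero_iff_of_nonneg {ι α : Type*} [Fintype ι] [Semiring α] [PartialOrder α]
    [IsOrderedRing α] {u v : ι → α} (hu : 0 ≤ u) (hv : 0 ≤ v) :
    u ⬝ᵥ v = 0 ↔ ∀ i, u i * v i = 0 :=
  (Fintype.sum_eq_zero_iff_of_nonneg fun i => mul_nonneg (hu i) (hv i)).trans funext_iff

theorem Pi.eq_abs_iff_nonneg_add_nonneg_sub_dotProduct_eq_zero {ι α : Type*} [Fintype ι] [CommRing α]
    [LinearOrder α] [IsStrictOrderedRing α] {y x : ι → α} :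
    y = |x| ↔ 0 ≤ y + x ∧ 0 ≤ y - x ∧ (y + x) ⬝ᵥ (y - x) = 0 := by
  constructor
  · intro h
    have hi i := eq_abs_iff_nonneg_add_nonneg_sub_mul_eq_zero.mp (congrFun h i)
    refine ⟨fun i => (hi i).1, fun i => (hi i).2.1, ?_⟩
    exact (dotProduct_eq_zero_iff_of_nonneg (fun i => (hi i).1) fun i => (hi i).2.1).mpr
      fun i => (hi i).2.2
  · rintro ⟨hadd, hsub, hdot⟩
    have hmul := (dotProduct_eq_zero_iff_of_nonneg hadd hsub).mp hdot
    funext i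
    exact eq_abs_iff_nonneg_add_nonneg_sub_mul_eq_zero.mpr ⟨hadd i, hsub i, hmul i⟩

theorem ave_iff_glcp {n : ℕ} (A : Matrix (Fin n) (Fin n) ℝ) (c x : Fin n → ℝ) :
    A.mulVec x - (fun i => |x i|) = c ↔
      0 ≤ A.mulVec x + x - c ∧ 0 ≤ A.mulVec x - x - c ∧
        (A.mulVec x + x - c) ⬝ᵥ (A.mulVec x - x - c) = 0 := by
  rw [show (fun i => |x i|) = |x| from rfl, sub_eq_iff_comm,
    Pi.eq_abs_iff_nonneg_add_nonneg_sub_dotProduct_eq_zero, add_sub_right_comm _ x c,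
    sub_right_comm _ x c]
end

section
/- Let V : [0,∞) → ℝ be differentiable and nonnegative with V'(t) ≤ −c₁·V(t)^{(ξ−1)/ξ} − c₂·V(t)^{(ξ+1)/ξ} for all t where V(t) > 0, with c₁, c₂ > 0 and ξ > 2. Then V(T) = 0 for all T ≥ T̂, where T̂ = (ξ/√(c₁c₂))·arctan(√(c₂/c₁)·V(0)^{1/ξ}); in particular V(T) = 0 for all T ≥ πξ/(2√(c₁c₂)). -/
/-!
With `w = V ^ (1/ξ)` the differential inequality becomes `ξ w' ≤ -(c₁ + c₂ w²)`, and since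
`c₁ + c₂ w² = c₁ (1 + (√(c₂/c₁) w)²)` the function `arctan (√(c₂/c₁) w)` decreases at rate at least
`√(c₁ c₂) / ξ` as long as `V > 0`. It starts at `arctan (√(c₂/c₁) V(0)^(1/ξ)) < π/2` and stays
nonnegative, so `V` cannot stay positive up to `T̂`; being nonnegative with nonpositive derivative,
`V` is nonincreasing and hence vanishes from `T̂` on.
-/

open Real Set

lemma antitoneOn_of_hasDerivAt_nonpos {D : Set ℝ} (hD : Convex ℝ D) {f f' : ℝ → ℝ}
    (hf : ∀ x ∈ D, HasDerivAt f (f' x) x) (hf' : ∀ x ∈ interior D, f' x ≤ 0) :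
    AntitoneOn f D :=
  antitoneOn_of_hasDerivWithinAt_nonpos hD
    (fun x hx => (hf x hx).continuousAt.continuousWithinAt)
    (fun x hx => (hf x (interior_subset hx)).hasDerivWithinAt) hf'

lemma antitoneOn_Ici_of_nonneg_of_deriv_nonpos_of_pos {a : ℝ} {V V' : ℝ → ℝ}
    (hV : ∀ t ≥ a, HasDerivAt V (V' t) t) (hVnn : ∀ t ≥ a, 0 ≤ V t)
    (hV' : ∀ t > a, 0 < V t → V' t ≤ 0) : AntitoneOn V (Ici a) := by
  refine antitoneOn_of_hasDerivAt_nonpos (convex_Ici a) hV fun t ht => ?_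
  rw [interior_Ici] at ht
  rcases (hVnn t (le_of_lt ht)).lt_or_eq with hpos | hzero
  · exact hV' t ht hpos
  · have hmin : IsLocalMin V t := by
      filter_upwards [Ici_mem_nhds ht] with y hy
      rw [← hzero]
      exact hVnn y hy
    exact (hmin.hasDerivAt_eq_zero (hV t ht.le)).le

section SettlingTime

variable {ξ c₁ c₂ : ℝ}

/-- The paper's `T̂`, as a function of `v₀ = V 0`. -/
noncomputable def settlingTime (ξ c₁ c₂ v₀ : ℝ) : ℝ :=
  ξ / √(c₁ * c₂) * arctan (√(c₂ / c₁) * v₀ ^ (1 / ξ))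

lemma settlingTime_nonneg (hξ : 0 < ξ) {v₀ : ℝ} (hv₀ : 0 ≤ v₀) :
    0 ≤ settlingTime ξ c₁ c₂ v₀ :=
  mul_nonneg (by positivity) (arctan_nonneg.2 (by positivity))

lemma settlingTime_le (hξ : 0 < ξ) (v₀ : ℝ) :
    settlingTime ξ c₁ c₂ v₀ ≤ π * ξ / (2 * √(c₁ * c₂)) :=
  calc settlingTime ξ c₁ c₂ v₀ ≤ ξ / √(c₁ * c₂) * (π / 2) :=
        mul_le_mul_of_nonneg_left (arctan_lt_pi_div_two _).le (by positivity)
    _ = π * ξ / (2 * √(c₁ * c₂)) := by ring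

lemma sqrt_div_mul_self (hc₁ : 0 < c₁) : √(c₂ / c₁) * c₁ = √(c₁ * c₂) := by
  rw [← sqrt_sq hc₁.le, ← sqrt_mul' _ (sq_nonneg c₁), sqrt_sq hc₁.le]
  congr 1
  field_simp

lemma one_div_mul_rpow_sub_one_mul_le (hξ : 0 < ξ) {v d : ℝ} (hv : 0 < v)
    (hd : d ≤ -c₁ * v ^ ((ξ - 1) / ξ) - c₂ * v ^ ((ξ + 1) / ξ)) :
    d * (1 / ξ) * v ^ (1 / ξ - 1) ≤ -(c₁ + c₂ * (v ^ (1 / ξ)) ^ 2) / ξ := by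
  have hlow : v ^ (1 / ξ - 1) * v ^ ((ξ - 1) / ξ) = 1 := by
    rw [← rpow_add hv, show 1 / ξ - 1 + (ξ - 1) / ξ = 0 by field_simp; ring, rpow_zero]
  have hhigh : v ^ (1 / ξ - 1) * v ^ ((ξ + 1) / ξ) = (v ^ (1 / ξ)) ^ 2 := by
    rw [← rpow_add hv, ← rpow_natCast, ← rpow_mul hv.le]
    congr 1
    field_simp
    ring
  calc d * (1 / ξ) * v ^ (1 / ξ - 1)
      ≤ (-c₁ * v ^ ((ξ - 1) / ξ) - c₂ * v ^ ((ξ + 1) / ξ)) * (1 / ξ) * v ^ (1 / ξ - 1) := by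
        gcongr
    _ = -(c₁ * (v ^ (1 / ξ - 1) * v ^ ((ξ - 1) / ξ))
          + c₂ * (v ^ (1 / ξ - 1) * v ^ ((ξ + 1) / ξ))) / ξ := by ring
    _ = -(c₁ + c₂ * (v ^ (1 / ξ)) ^ 2) / ξ := by rw [hlow, hhigh, mul_one]

lemma one_div_one_add_sq_mul_le (hξ : 0 < ξ) (hc₁ : 0 < c₁) (hc₂ : 0 ≤ c₂) {w w' : ℝ}
    (hw' : w' ≤ -(c₁ + c₂ * w ^ 2) / ξ) :
    1 / (1 + (√(c₂ / c₁) * w) ^ 2) * (√(c₂ / c₁) * w') ≤ -(√(c₁ * c₂) / ξ) := by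
  set s := √(c₂ / c₁)
  have hfactor : c₁ + c₂ * w ^ 2 = c₁ * (1 + (s * w) ^ 2) := by
    rw [mul_pow, sq_sqrt (div_nonneg hc₂ hc₁.le)]
    field_simp
  have hD : 0 < 1 + (s * w) ^ 2 := by positivity
  calc 1 / (1 + (s * w) ^ 2) * (s * w')
      ≤ 1 / (1 + (s * w) ^ 2) * (s * (-(c₁ * (1 + (s * w) ^ 2)) / ξ)) := by
        rw [← hfactor]
        gcongr
    _ = -(s * c₁) / ξ := by field_simp
    _ = -(√(c₁ * c₂) / ξ) := by rw [sqrt_div_mul_self hc₁, neg_div]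

lemma antitoneOn_arctan_rpow_add_mul (hξ : 0 < ξ) (hc₁ : 0 < c₁) (hc₂ : 0 ≤ c₂)
    {V V' : ℝ → ℝ} {a b : ℝ} (hV : ∀ t ∈ Icc a b, HasDerivAt V (V' t) t)
    (hpos : ∀ t ∈ Icc a b, 0 < V t)
    (hineq : ∀ t ∈ Icc a b, V' t ≤ -c₁ * V t ^ ((ξ - 1) / ξ) - c₂ * V t ^ ((ξ + 1) / ξ)) :
    AntitoneOn (fun t => arctan (√(c₂ / c₁) * V t ^ (1 / ξ)) + √(c₁ * c₂) / ξ * t)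
      (Icc a b) := by
  refine antitoneOn_of_hasDerivAt_nonpos (convex_Icc a b)
    (f' := fun t => 1 / (1 + (√(c₂ / c₁) * V t ^ (1 / ξ)) ^ 2)
      * (√(c₂ / c₁) * (V' t * (1 / ξ) * V t ^ (1 / ξ - 1))) + √(c₁ * c₂) / ξ * 1)
    (fun t ht => ?_) fun t ht => ?_
  · exact ((((hV t ht).rpow_const (Or.inl (hpos t ht).ne')).const_mul _).arctan).add
      ((hasDerivAt_id t).const_mul _)
  · have ht' := interior_subset ht
    have hw' := one_div_mul_rpow_sub_one_mul_le hξ (hpos t ht') (hineq t ht')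
    have := one_div_one_add_sq_mul_le hξ hc₁ hc₂ hw'
    linarith

lemma lt_settlingTime_of_pos (hξ : 0 < ξ) (hc₁ : 0 < c₁) (hc₂ : 0 < c₂)
    {V V' : ℝ → ℝ} {T : ℝ} (hT : 0 ≤ T) (hV : ∀ t ∈ Icc 0 T, HasDerivAt V (V' t) t)
    (hpos : ∀ t ∈ Icc 0 T, 0 < V t)
    (hineq : ∀ t ∈ Icc 0 T, V' t ≤ -c₁ * V t ^ ((ξ - 1) / ξ) - c₂ * V t ^ ((ξ + 1) / ξ)) :
    T < settlingTime ξ c₁ c₂ (V 0) := by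
  have hB : 0 < √(c₁ * c₂) := sqrt_pos.2 (mul_pos hc₁ hc₂)
  have hdecr := antitoneOn_arctan_rpow_add_mul hξ hc₁ hc₂.le hV hpos hineq
    (left_mem_Icc.2 hT) (right_mem_Icc.2 hT) hT
  have harctan : 0 < arctan (√(c₂ / c₁) * V T ^ (1 / ξ)) :=
    arctan_pos.2 (mul_pos (sqrt_pos.2 (div_pos hc₂ hc₁)) (rpow_pos_of_pos (hpos T ⟨hT, le_rfl⟩) _))
  have hlt : √(c₁ * c₂) / ξ * T < arctan (√(c₂ / c₁) * V 0 ^ (1 / ξ)) := by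
    simp only [mul_zero, add_zero] at hdecr
    linarith
  calc T = ξ / √(c₁ * c₂) * (√(c₁ * c₂) / ξ * T) := by field_simp
    _ < settlingTime ξ c₁ c₂ (V 0) := by unfold settlingTime; gcongr

end SettlingTime

theorem settling_time {ξ c₁ c₂ : ℝ} (hξ : 2 < ξ) (hc₁ : 0 < c₁) (hc₂ : 0 < c₂)
    (V V' : ℝ → ℝ) (hV : ∀ t ≥ (0 : ℝ), HasDerivAt V (V' t) t)
    (hVnn : ∀ t ≥ (0 : ℝ), 0 ≤ V t)
    (hineq : ∀ t ≥ (0 : ℝ), 0 < V t →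
      V' t ≤ -c₁ * V t ^ ((ξ - 1) / ξ) - c₂ * V t ^ ((ξ + 1) / ξ)) :
    (∀ T ≥ (ξ / Real.sqrt (c₁ * c₂)) * Real.arctan (Real.sqrt (c₂ / c₁) * V 0 ^ (1 / ξ)),
        V T = 0) ∧
      ∀ T ≥ Real.pi * ξ / (2 * Real.sqrt (c₁ * c₂)), V T = 0 := by
  have hξ0 : 0 < ξ := by linarith
  have hanti : AntitoneOn V (Ici 0) :=
    antitoneOn_Ici_of_nonneg_of_deriv_nonpos_of_pos hV hVnn fun t ht hpos => by
      have := hineq t ht.le hpos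
      have := rpow_pos_of_pos hpos ((ξ - 1) / ξ)
      have := rpow_pos_of_pos hpos ((ξ + 1) / ξ)
      nlinarith
  have hT₀ := settlingTime_nonneg (c₁ := c₁) (c₂ := c₂) hξ0 (hVnn 0 le_rfl)
  have hvanish : ∀ T ≥ settlingTime ξ c₁ c₂ (V 0), V T = 0 := by
    intro T hT
    refine le_antisymm ?_ (hVnn T (hT₀.trans hT))
    by_contra! hVT
    have hpos : ∀ t ∈ Icc 0 T, 0 < V t := fun t ht =>
      hVT.trans_le (hanti ht.1 (hT₀.trans hT) ht.2)
    exact (lt_settlingTime_of_pos hξ0 hc₁ hc₂ (hT₀.trans hT) (fun t ht => hV t ht.1) hpos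
      (fun t ht => hineq t ht.1 (hpos t ht))).not_ge hT
  exact ⟨hvanish, fun T hT => hvanish T ((settlingTime_le hξ0 _).trans hT)⟩
end
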